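/- arXiv:0911.5668 — 4 statements merged into one kernel-verified Lean document; each statement's English description precedes it below -/
import Mathlib

section
/- Let (M, d) be a complete separable metric space and μ a Borel probability measure on M. Then for any ε₁ > 0 there exist ε₂ > 0 and a finite collection of disjoint measurable subsets S₁, …, S_M of M such that: (1) μ(⋃ᵢ Sᵢ) > 1 − ε₁; (2) for each i, sup{d(x,y) : x,y ∈ Sᵢ} < ε₁; and (3) for i ≠ j and x ∈ Sᵢ, y ∈ Sⱼ, d(x,y) > ε₂. -/
/-!
Disjointify the balls of radius `ε₁ / 2` around a dense sequence: this partitions `M` into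
countably many measurable pieces of diameter `< ε₁`, finitely many of which carry all but
`ε₁ / 2` of the mass. As `M` is Polish, `μ` is inner regular for compact sets, so each of these
pieces contains a compact set, with total loss of mass `< ε₁ / 2`. Finitely many pairwise
disjoint compact sets are at positive distance from each other, which gives `ε₂`.
-/

open MeasureTheory Filter Topology Set Function
open scoped ENNReal

theorem exists_measurable_partition_dist_lt {X : Type*} [PseudoMetricSpace X]
    [TopologicalSpace.SeparableSpace X] [Nonempty X] [MeasurableSpace X]
    [OpensMeasurableSpace X] {ε : ℝ} (hε : 0 < ε) :
    ∃ A : ℕ → Set X, (∀ k, MeasurableSet (A k)) ∧ Pairwise (Disjoint on A) ∧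
      ⋃ k, A k = univ ∧ ∀ k, ∀ x ∈ A k, ∀ y ∈ A k, dist x y < ε := by
  set c := TopologicalSpace.denseSeq X
  refine ⟨disjointed fun k ↦ Metric.ball (c k) (ε / 2),
    MeasurableSet.disjointed fun _ ↦ measurableSet_ball, disjoint_disjointed _, ?_, ?_⟩
  · rw [iUnion_disjointed]
    exact eq_univ_of_forall fun x ↦ mem_iUnion.2
      ((TopologicalSpace.denseRange_denseSeq X).exists_dist_lt x (half_pos hε))
  · intro k x hx y hy
    calc dist x y ≤ dist x (c k) + dist y (c k) := dist_triangle_right _ _ _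
      _ < ε / 2 + ε / 2 := add_lt_add (disjointed_subset _ k hx) (disjointed_subset _ k hy)
      _ = ε := add_halves ε

theorem exists_lt_measureReal_iUnion_fin {α : Type*} [MeasurableSpace α] (μ : Measure α)
    [IsFiniteMeasure μ] (A : ℕ → Set α) {r : ℝ} (hr : r < μ.real (⋃ k, A k)) :
    ∃ n, r < μ.real (⋃ i : Fin n, A i) := by
  have hmono : Monotone fun n ↦ ⋃ i : Fin n, A i := fun a b hab ↦
    iUnion_subset fun i ↦ subset_iUnion_of_subset (Fin.castLE hab i) subset_rfl
  have hcover : ⋃ n, ⋃ i : Fin n, A i = ⋃ k, A k :=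
    subset_antisymm (iUnion_subset fun n ↦ iUnion_subset fun i ↦ subset_iUnion A i)
      (iUnion_subset fun k ↦
        subset_iUnion_of_subset (k + 1) (subset_iUnion_of_subset (Fin.last k) subset_rfl))
  have hlim : Tendsto (fun n ↦ μ.real (⋃ i : Fin n, A i)) atTop (𝓝 (μ.real (⋃ k, A k))) := by
    rw [← hcover]
    exact (ENNReal.tendsto_toReal (measure_ne_top _ _)).comp
      (tendsto_measure_iUnion_atTop hmono)
  exact (hlim.eventually (eventually_gt_nhds hr)).exists

theorem exists_isCompact_subset_measure_iUnion_sdiff_lt {X ι : Type*} [TopologicalSpace X]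
    [T2Space X] [MeasurableSpace X] [OpensMeasurableSpace X] [Countable ι] (μ : Measure X)
    [μ.InnerRegularCompactLTTop] {A : ι → Set X} (hA : ∀ i, MeasurableSet (A i))
    (hA' : ∀ i, μ (A i) ≠ ∞) {ε : ℝ≥0∞} (hε : ε ≠ 0) :
    ∃ K : ι → Set X, (∀ i, K i ⊆ A i) ∧ (∀ i, IsCompact (K i)) ∧
      μ ((⋃ i, A i) \ ⋃ i, K i) < ε := by
  obtain ⟨δ, hδ, hδε⟩ := ENNReal.exists_pos_sum_of_countable' hε ι
  choose K hKA hK hKδ using fun i ↦ (hA i).exists_isCompact_sdiff_lt (hA' i) (hδ i).ne'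
  refine ⟨K, hKA, hK, ?_⟩
  have hsub : (⋃ i, A i) \ ⋃ i, K i ⊆ ⋃ i, A i \ K i := by
    rintro x ⟨hxA, hxK⟩
    obtain ⟨i, hi⟩ := mem_iUnion.1 hxA
    exact mem_iUnion.2 ⟨i, hi, fun h ↦ hxK (mem_iUnion.2 ⟨i, h⟩)⟩
  calc μ ((⋃ i, A i) \ ⋃ i, K i) ≤ μ (⋃ i, A i \ K i) := measure_mono hsub
    _ ≤ ∑' i, μ (A i \ K i) := measure_iUnion_le _
    _ ≤ ∑' i, δ i := ENNReal.tsum_le_tsum fun i ↦ (hKδ i).le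
    _ < ε := hδε

theorem eventually_nhdsGT_forall_lt_dist {X : Type*} [PseudoMetricSpace X] {K L : Set X}
    (hK : IsCompact K) (hL : IsClosed L) (hKL : Disjoint K L) :
    ∀ᶠ δ in 𝓝[>] (0 : ℝ), ∀ x ∈ K, ∀ y ∈ L, δ < dist x y := by
  obtain ⟨r, hr, h⟩ := Metric.exists_pos_forall_lt_edist hK hL hKL
  filter_upwards [Ioo_mem_nhdsGT (show (0 : ℝ) < r from hr)] with δ hδ x hx y hy
  have hxy := h x hx y hy
  rw [edist_nndist, ENNReal.coe_lt_coe, ← NNReal.coe_lt_coe, coe_nndist] at hxy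
  exact hδ.2.trans hxy

theorem exists_pos_forall_lt_dist_of_pairwise_disjoint {X ι : Type*} [MetricSpace X] [Finite ι]
    {K : ι → Set X} (hK : ∀ i, IsCompact (K i)) (hdisj : Pairwise (Disjoint on K)) :
    ∃ δ, 0 < δ ∧ ∀ i j, i ≠ j → ∀ x ∈ K i, ∀ y ∈ K j, δ < dist x y := by
  have h : ∀ᶠ δ in 𝓝[>] (0 : ℝ), ∀ i j, i ≠ j → ∀ x ∈ K i, ∀ y ∈ K j, δ < dist x y := by
    refine eventually_all.2 fun i ↦ eventually_all.2 fun j ↦ ?_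
    by_cases hij : i = j
    · exact .of_forall fun _ h ↦ absurd hij h
    · exact (eventually_nhdsGT_forall_lt_dist (hK i) (hK j).isClosed (hdisj hij)).mono
        fun _ h _ ↦ h
  exact (h.and self_mem_nhdsWithin).exists.imp fun δ h ↦ ⟨h.2, h.1⟩

/-- In a complete separable metric space with a Borel probability
measure, for any ε₁ > 0 there are finitely many disjoint measurable sets of
diameter < ε₁ covering all but ε₁ of the mass, which are pairwise ε₂-separated. -/
theorem stmt_0 {M : Type*} [MetricSpace M] [CompleteSpace M]
    [TopologicalSpace.SeparableSpace M] [MeasurableSpace M] [BorelSpace M]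
    (μ : Measure M) [IsProbabilityMeasure μ] :
    ∀ ε₁ : ℝ, 0 < ε₁ → ∃ ε₂ : ℝ, 0 < ε₂ ∧ ∃ (n : ℕ) (S : Fin n → Set M),
      (∀ i, MeasurableSet (S i)) ∧
      Pairwise (Function.onFun Disjoint S) ∧
      1 - ε₁ < (μ (⋃ i, S i)).toReal ∧
      (∀ i, ∀ x ∈ S i, ∀ y ∈ S i, dist x y < ε₁) ∧
      (∀ i j, i ≠ j → ∀ x ∈ S i, ∀ y ∈ S j, ε₂ < dist x y) := by
  intro ε₁ hε₁
  have := nonempty_of_isProbabilityMeasure μ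
  obtain ⟨A, hA, hAdisj, hAcover, hAdiam⟩ := exists_measurable_partition_dist_lt (X := M) hε₁
  obtain ⟨n, hn⟩ : ∃ n, 1 - ε₁ / 2 < μ.real (⋃ i : Fin n, A i) :=
    exists_lt_measureReal_iUnion_fin μ A (by rw [hAcover, probReal_univ]; linarith)
  obtain ⟨K, hKA, hK, hKμ⟩ := exists_isCompact_subset_measure_iUnion_sdiff_lt μ
    (A := fun i : Fin n ↦ A i) (fun i ↦ hA i) (fun _ ↦ measure_ne_top _ _)
    (ENNReal.ofReal_pos.2 (half_pos hε₁)).ne'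
  have hKdisj : Pairwise (Disjoint on K) := fun i j hij ↦
    (hAdisj (Fin.val_injective.ne hij)).mono (hKA i) (hKA j)
  obtain ⟨ε₂, hε₂, hsep⟩ := exists_pos_forall_lt_dist_of_pairwise_disjoint hK hKdisj
  refine ⟨ε₂, hε₂, n, K, fun i ↦ (hK i).isClosed.measurableSet, hKdisj, ?_,
    fun i x hx y hy ↦ hAdiam i x (hKA i hx) y (hKA i hy), hsep⟩
  have hloss : μ.real _ < ε₁ / 2 := ENNReal.toReal_lt_of_lt_ofReal hKμ
  have hsdiff := le_measureReal_sdiff (μ := μ) (s₁ := ⋃ i : Fin n, A i) (s₂ := ⋃ i, K i)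
  change 1 - ε₁ < μ.real _
  linarith
end

section
/- Let μ be a probability measure on a measurable space Ω and D : Ω → ℕ a measurable function with 0 < E_μ[D] < ∞. Define the biased measure ν by ν(A) = E_μ[1_A · D] / E_μ[D]. If there exist B₁, B₂ > 0 with μ(D > x) ≤ B₁ exp(−B₂ x) for all x ≥ 0, then there exists a constant C > 0 such that for every measurable set A with ν(A) > 0, μ(A) ≥ C⁻¹ · ν(A) / (− log ν(A) + 1). -/
/-!
Split `∫_A D` at a level `N`: the part below `N` is at most `N μ(A)`, and the part above `N`
is at most `E_μ[(D - N)⁺]`, which by the layer-cake formula and the tail bound is `O(exp (-B₂ N))`.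
Taking `N ≍ 1 - log ν(A)` makes the excess at most half of `∫_A D = ν(A) E_μ[D]`, so
`μ(A) ≥ ν(A) E_μ[D] / (2N)`.
-/

open MeasureTheory Set Real

section

variable {Ω : Type*} [MeasurableSpace Ω] {μ : Measure Ω} {f : Ω → ℝ}

lemma setIntegral_le_mul_measureReal_add_integral_max_sub [IsFiniteMeasure μ]
    (hf : Integrable f μ) {A : Set Ω} (hA : MeasurableSet A) (N : ℝ) :
    ∫ ω in A, f ω ∂μ ≤ N * μ.real A + ∫ ω, max (f ω - N) 0 ∂μ := by
  have hg : Integrable (fun ω => max (f ω - N) 0) μ :=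
    (hf.sub (integrable_const N)).pos_part
  calc ∫ ω in A, f ω ∂μ ≤ ∫ ω in A, (N + max (f ω - N) 0) ∂μ :=
        setIntegral_mono_on hf.integrableOn ((integrable_const N).add hg).integrableOn hA
          fun ω _ => by linarith [le_max_left (f ω - N) 0]
    _ = N * μ.real A + ∫ ω in A, max (f ω - N) 0 ∂μ := by
        rw [integral_add (integrable_const N).integrableOn hg.integrableOn, setIntegral_const,
          smul_eq_mul, mul_comm]
    _ ≤ N * μ.real A + ∫ ω, max (f ω - N) 0 ∂μ :=
        add_le_add_right (setIntegral_le_integral hg (ae_of_all _ fun ω => le_max_right _ _)) _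

lemma setIntegral_div_le_measureReal_of_integral_max_sub_le [IsFiniteMeasure μ]
    (hf : Integrable f μ) {A : Set Ω} (hA : MeasurableSet A) {N : ℝ} (hN : 0 < N)
    (hexcess : ∫ ω, max (f ω - N) 0 ∂μ ≤ (∫ ω in A, f ω ∂μ) / 2) :
    (∫ ω in A, f ω ∂μ) / (2 * N) ≤ μ.real A := by
  rw [div_le_iff₀ (by positivity)]
  linarith [setIntegral_le_mul_measureReal_add_integral_max_sub hf hA N]

lemma integral_max_sub_le_of_tail (hf : Integrable f μ) {B₁ B₂ : ℝ} (hB₂ : 0 < B₂)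
    (htail : ∀ x : ℝ, 0 ≤ x → μ.real {ω | x < f ω} ≤ B₁ * exp (-B₂ * x))
    {N : ℝ} (hN : 0 ≤ N) :
    ∫ ω, max (f ω - N) 0 ∂μ ≤ B₁ / B₂ * exp (-B₂ * N) := by
  have hg : Integrable (fun ω => max (f ω - N) 0) μ :=
    hf.pos_part.mono ((hf.aestronglyMeasurable.sub aestronglyMeasurable_const).sup aestronglyMeasurable_const)
      (ae_of_all _ fun ω => by
        rw [norm_of_nonneg (le_max_right _ _), norm_of_nonneg (le_max_right _ _)]
        exact max_le_max_right 0 (by linarith))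
  have hlevel : ∀ t ∈ Ioi (0 : ℝ), {ω | t < max (f ω - N) 0} = {ω | N + t < f ω} := by
    intro t ht
    ext ω
    simp only [mem_ofPred_eq, lt_max_iff, (mem_Ioi.mp ht).not_gt, or_false]
    constructor <;> intro h <;> linarith
  rw [hg.integral_eq_integral_meas_lt (ae_of_all _ fun ω => le_max_right (f ω - N) 0)]
  calc ∫ t in Ioi 0, μ.real {ω | t < max (f ω - N) 0}
      ≤ ∫ t in Ioi 0, B₁ * exp (-B₂ * N) * exp (-B₂ * t) := by
        refine integral_mono_of_nonneg (ae_of_all _ fun t => measureReal_nonneg)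
          ((exp_neg_integrableOn_Ioi 0 hB₂).const_mul _) ?_
        refine (ae_restrict_iff' measurableSet_Ioi).mpr (ae_of_all _ fun t ht => ?_)
        simp only [hlevel t ht, mul_assoc, ← exp_add, ← mul_add]
        exact htail _ (by linarith [mem_Ioi.mp ht])
    _ = B₁ / B₂ * exp (-B₂ * N) := by
        rw [integral_const_mul, integral_exp_mul_Ioi (by linarith), mul_zero, exp_zero]
        field_simp

end

theorem stmt_1_general {Ω : Type*} [MeasurableSpace Ω] (μ : Measure Ω) [IsProbabilityMeasure μ]
    (D : Ω → ℕ)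
    (hint : Integrable (fun ω => (D ω : ℝ)) μ)
    (hpos : 0 < ∫ ω, (D ω : ℝ) ∂μ)
    (B₁ B₂ : ℝ) (hB₁ : 0 < B₁) (hB₂ : 0 < B₂)
    (htail : ∀ x : ℝ, 0 ≤ x → (μ {ω | x < (D ω : ℝ)}).toReal ≤ B₁ * Real.exp (-B₂ * x)) :
    ∃ C : ℝ, 0 < C ∧ ∀ A : Set Ω, MeasurableSet A →
      0 < (∫ ω in A, (D ω : ℝ) ∂μ) / (∫ ω, (D ω : ℝ) ∂μ) →
      C⁻¹ * (((∫ ω in A, (D ω : ℝ) ∂μ) / (∫ ω, (D ω : ℝ) ∂μ)) /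
          (-Real.log ((∫ ω in A, (D ω : ℝ) ∂μ) / (∫ ω, (D ω : ℝ) ∂μ)) + 1))
        ≤ (μ A).toReal := by
  set m := ∫ ω, (D ω : ℝ) ∂μ
  -- `a ≥ log (2 B₁ / (B₂ m))` makes the excess small; `a ≥ 1` gives `a - log ν ≤ a (1 - log ν)`
  set a := max 1 (log (2 * (B₁ / B₂) / m))
  have ha : 1 ≤ a := le_max_left _ _
  refine ⟨2 * a / (B₂ * m), by positivity, fun A hA hν => ?_⟩
  set ν := (∫ ω in A, (D ω : ℝ) ∂μ) / m
  have hL : 0 ≤ -log ν := neg_nonneg.mpr <| log_nonpos hν.le <| div_le_one_of_le₀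
    (setIntegral_le_integral hint (ae_of_all _ fun ω => Nat.cast_nonneg _)) hpos.le
  set N := (a - log ν) / B₂
  have hN : 0 < N := div_pos (by linarith) hB₂
  have hBN : B₂ * N = a - log ν := mul_div_cancel₀ _ hB₂.ne'
  have hI : ∫ ω in A, (D ω : ℝ) ∂μ = m * ν := (mul_div_cancel₀ _ hpos.ne').symm
  have hexcess : ∫ ω, max ((D ω : ℝ) - N) 0 ∂μ ≤ (∫ ω in A, (D ω : ℝ) ∂μ) / 2 := by
    have hea : exp (-a) ≤ m / (2 * (B₁ / B₂)) :=
      calc exp (-a) ≤ exp (-log (2 * (B₁ / B₂) / m)) :=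
            exp_le_exp.mpr (neg_le_neg (le_max_right _ _))
        _ = m / (2 * (B₁ / B₂)) := by rw [exp_neg, exp_log (by positivity), inv_div]
    calc ∫ ω, max ((D ω : ℝ) - N) 0 ∂μ ≤ B₁ / B₂ * exp (-B₂ * N) :=
          integral_max_sub_le_of_tail hint hB₂ htail hN.le
      _ = B₁ / B₂ * exp (-a) * ν := by
          rw [neg_mul, hBN, neg_sub, sub_eq_neg_add, exp_add, exp_log hν, mul_assoc]
      _ ≤ B₁ / B₂ * (m / (2 * (B₁ / B₂))) * ν := by gcongr
      _ = (∫ ω in A, (D ω : ℝ) ∂μ) / 2 := by rw [hI]; field_simp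
  have hμA := setIntegral_div_le_measureReal_of_integral_max_sub_le hint hA hN hexcess
  rw [hI] at hμA
  rw [← measureReal_def]
  calc (2 * a / (B₂ * m))⁻¹ * (ν / (-log ν + 1)) ≤ m * ν / (2 * N) := by
        rw [inv_div, div_mul_div_comm, div_le_div_iff₀ (by positivity) (by positivity)]
        have hBN_le : B₂ * N ≤ a * (-log ν + 1) := by rw [hBN]; nlinarith
        nlinarith [mul_le_mul_of_nonneg_left hBN_le (mul_pos hpos hν).le]
    _ ≤ μ.real A := hμA

/-- Comparison between a probability measure μ and its degree-biased
version ν(A) = E_μ[1_A D]/E_μ[D] under an exponential tail bound for D: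
μ(A) ≥ C⁻¹ ν(A)/(-log ν(A) + 1). -/
theorem stmt_1 {Ω : Type*} [MeasurableSpace Ω] (μ : Measure Ω) [IsProbabilityMeasure μ]
    (D : Ω → ℕ) (hDmeas : Measurable D)
    (hint : Integrable (fun ω => (D ω : ℝ)) μ)
    (hpos : 0 < ∫ ω, (D ω : ℝ) ∂μ)
    (B₁ B₂ : ℝ) (hB₁ : 0 < B₁) (hB₂ : 0 < B₂)
    (htail : ∀ x : ℝ, 0 ≤ x → (μ {ω | x < (D ω : ℝ)}).toReal ≤ B₁ * Real.exp (-B₂ * x)) :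
    ∃ C : ℝ, 0 < C ∧ ∀ A : Set Ω, MeasurableSet A →
      0 < (∫ ω in A, (D ω : ℝ) ∂μ) / (∫ ω, (D ω : ℝ) ∂μ) →
      C⁻¹ * (((∫ ω in A, (D ω : ℝ) ∂μ) / (∫ ω, (D ω : ℝ) ∂μ)) /
          (-Real.log ((∫ ω in A, (D ω : ℝ) ∂μ) / (∫ ω, (D ω : ℝ) ∂μ)) + 1))
        ≤ (μ A).toReal :=
  stmt_1_general μ D hint hpos B₁ B₂ hB₁ hB₂ htail
end

section
/- Let d ≥ 1, d < s < d + 1, and set α = s − d ∈ (0,1). Let (w_i(x))_{i ≥ 1, x ∈ ℤᵈ} be independent Bernoulli variables with P(w_i(x) = 1) ≤ C‖x‖^{−s} for x ≠ 0. Then there exists c > 0 such that for all n large enough and all y > 0: P( n^{−1/α} · ∑_{i=1}^{n} ∑_{x ∈ ℤᵈ} ‖x‖ · w_i(x) > y ) ≤ c · y^{−α}. -/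
/-!
Truncate the jumps at the scale `t = y n^{1/α}`. Some jump longer than `t` occurs with probability
at most `n ∑_{‖x‖ > t} C ‖x‖^{-s} ≍ n t^{-α} = y^{-α}` (union bound). The jumps of length at most
`t` have expected total at most `n ∑_{‖x‖ ≤ t} C ‖x‖^{1-s} ≍ n t^{1-α}`, so by Markov's inequality
they add up to more than `t` with probability `≍ n t^{-α} = y^{-α}` as well. Both lattice sums are
computed shell by shell: the sup-norm sphere of radius `k ≥ 1` in `ℤᵈ` has at most `2d (3k)^{d-1}`
points, which turns them into `∑_{k > t} k^{-1-α} ≤ t^{-α}/α` (integral test) and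
`∑_{k ≤ t} k^{-α} ≤ t^{1-α}/(1-α)` (concavity of `x ↦ x^{1-α}`).
-/

open MeasureTheory ProbabilityTheory

open scoped ENNReal

open Real in
theorem mul_rpow_sub_one_le_rpow_sub_rpow {p x : ℝ} (hp₀ : 0 ≤ p) (hp₁ : p ≤ 1) (hx : 1 ≤ x) :
    p * x ^ (p - 1) ≤ x ^ p - (x - 1) ^ p := by
  have hx₀ : 0 < x := by linarith
  have hbern := rpow_one_add_le_one_add_mul_self (s := -x⁻¹)
    (by rw [neg_le_neg_iff]; exact inv_le_one_of_one_le₀ hx) hp₀ hp₁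
  have hsplit : (x - 1) ^ p = (1 + -x⁻¹) ^ p * x ^ p := by
    rw [← mul_rpow (by simpa using inv_le_one_of_one_le₀ hx) hx₀.le]
    congr 1
    field_simp
    ring
  calc p * x ^ (p - 1) = x ^ p - (1 + p * -x⁻¹) * x ^ p := by
        rw [rpow_sub_one hx₀.ne']; ring
    _ ≤ x ^ p - (x - 1) ^ p := by
        rw [hsplit]
        gcongr

open Real in
theorem sum_range_rpow_neg_le {a : ℝ} (ha₀ : 0 < a) (ha₁ : a < 1) (K : ℕ) :
    ∑ k ∈ Finset.range (K + 1), (k : ℝ) ^ (-a) ≤ (K : ℝ) ^ (1 - a) / (1 - a) := by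
  rw [le_div_iff₀ (by linarith)]
  induction K with
  | zero => simp [zero_rpow (by linarith : -a ≠ 0), zero_rpow (by linarith : 1 - a ≠ 0)]
  | succ K ih =>
    have hstep := mul_rpow_sub_one_le_rpow_sub_rpow (x := K + 1) (p := 1 - a)
      (by linarith) (by linarith) (by simp)
    simp only [sub_sub_cancel_left, add_sub_cancel_right] at hstep
    rw [Finset.sum_range_succ, add_mul]
    push_cast
    linarith

open Real Set in
theorem tsum_rpow_neg_one_sub_of_lt_le {a : ℝ} (ha : 0 < a) {K : ℕ} (hK : 1 ≤ K) :
    ∑' k : ℕ, (if K < k then ENNReal.ofReal ((k : ℝ) ^ (-1 - a)) else 0)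
      ≤ ENNReal.ofReal ((K : ℝ) ^ (-a) / a) := by
  have hK₀ : (0 : ℝ) < K := by exact_mod_cast hK
  have hexp : -1 - a < -1 := by linarith
  have anti : AntitoneOn (fun x : ℝ => x ^ (-1 - a)) (Ici K) :=
    (antitoneOn_rpow_Ioi_of_exponent_nonpos (by linarith)).mono (Ici_subset_Ioi.2 hK₀)
  have integrable := integrableOn_Ioi_rpow_of_lt hexp hK₀
  have nonneg : ∀ x ∈ Ioi (K : ℝ), 0 ≤ x ^ (-1 - a) := fun x hx =>
    rpow_nonneg (hK₀.trans hx).le _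
  have hshift : ∑' k : ℕ, (if K < k then ENNReal.ofReal ((k : ℝ) ^ (-1 - a)) else 0)
      = ∑' n : ℕ, ENNReal.ofReal (((n + (K + 1) : ℕ) : ℝ) ^ (-1 - a)) := by
    rw [← (add_left_injective (K + 1)).tsum_eq fun k hk => ?_]
    · exact tsum_congr fun n => if_pos (by omega)
    · have : K < k := by by_contra h; exact hk (if_neg h)
      exact ⟨k - (K + 1), by simp only; omega⟩
  have hsum := (summable_nat_add_iff (K + 1)).2
    (anti.summable_of_integrableOn_Ioi integrable nonneg)
  rw [hshift, ← ENNReal.ofReal_tsum_of_nonneg (fun n => by positivity) hsum]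
  refine ENNReal.ofReal_le_ofReal ((anti.tsum_comp_add_le_integral K integrable nonneg).trans ?_)
  rw [integral_Ioi_rpow_of_lt hexp hK₀, show -1 - a + 1 = -a by ring, neg_div_neg_eq]

open Real in
theorem rpow_neg_div_add_rpow_one_sub_div_le {a t K : ℝ} (ha₀ : 0 < a) (ha₁ : a < 1) (ht : 0 < t)
    (htK : t ≤ K) (hKt : K ≤ 2 * t) :
    K ^ (-a) / a + K ^ (1 - a) / (1 - a) / t ≤ (1 / a + 2 / (1 - a)) * t ^ (-a) := by
  have hlarge : K ^ (-a) ≤ t ^ (-a) := rpow_le_rpow_of_nonpos ht htK (by linarith)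
  have hsmall : K ^ (1 - a) / t ≤ 2 * t ^ (-a) :=
    calc K ^ (1 - a) / t ≤ (2 * t) ^ (1 - a) / t := by gcongr; linarith
      _ = 2 ^ (1 - a) * t ^ (-a) := by
          rw [mul_rpow zero_le_two ht.le, sub_eq_add_neg, rpow_add ht, rpow_one]
          field_simp
      _ ≤ 2 * t ^ (-a) := by
          gcongr
          simpa using rpow_le_rpow_of_exponent_le one_le_two (by linarith : 1 - a ≤ 1)
  calc K ^ (-a) / a + K ^ (1 - a) / (1 - a) / t
      = K ^ (-a) / a + K ^ (1 - a) / t / (1 - a) := by ring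
    _ ≤ t ^ (-a) / a + 2 * t ^ (-a) / (1 - a) := by gcongr
    _ = (1 / a + 2 / (1 - a)) * t ^ (-a) := by ring

theorem ofReal_lt_ofReal_inv_mul_iff {y b : ℝ} (hy : 0 ≤ y) (hb : 0 < b) (S : ℝ≥0∞) :
    ENNReal.ofReal y < ENNReal.ofReal b⁻¹ * S ↔ ENNReal.ofReal (y * b) < S := by
  rw [ENNReal.ofReal_inv_of_pos hb, ← ENNReal.div_eq_inv_mul,
    ENNReal.lt_div_iff_mul_lt (Or.inl (ENNReal.ofReal_pos.2 hb).ne') (Or.inl ENNReal.ofReal_ne_top),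
    ← ENNReal.ofReal_mul hy]

def natSupNorm {d : ℕ} (x : Fin d → ℤ) : ℕ := Finset.univ.sup fun i => (x i).natAbs

section Lattice

variable {d : ℕ}

theorem nnnorm_eq_natSupNorm (x : Fin d → ℤ) : ‖x‖₊ = natSupNorm x := by
  rw [Pi.nnnorm_def, natSupNorm, Finset.apply_sup_eq_sup_comp (Nat.cast : ℕ → NNReal)
    (fun a b => by exact_mod_cast Nat.cast_max a b) (by simp)]
  simp [Function.comp_def, NNReal.natCast_natAbs]

theorem norm_eq_natSupNorm (x : Fin d → ℤ) : ‖x‖ = natSupNorm x := by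
  rw [← coe_nnnorm, nnnorm_eq_natSupNorm, NNReal.coe_natCast]

theorem natSupNorm_le_iff {x : Fin d → ℤ} {k : ℕ} :
    natSupNorm x ≤ k ↔ x ∈ Fintype.piFinset fun _ => Finset.Icc (-k : ℤ) k := by
  simp only [natSupNorm, Finset.sup_le_iff, Finset.mem_univ, true_implies,
    Fintype.mem_piFinset, Finset.mem_Icc]
  exact forall_congr' fun i => by omega

theorem encard_natSupNorm_preimage_le {k : ℕ} (hk : 1 ≤ k) :
    (natSupNorm ⁻¹' {k} : Set (Fin d → ℤ)).encard ≤ (2 * d * (3 * k) ^ (d - 1) : ℕ) := by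
  let box (m : ℕ) := Fintype.piFinset fun _ : Fin d => Finset.Icc (-m : ℤ) m
  have hsub : natSupNorm ⁻¹' {k} ⊆ (↑(box k \ box (k - 1)) : Set (Fin d → ℤ)) := by
    intro x (hx : natSupNorm x = k)
    simp only [box, Finset.coe_sdiff, Set.mem_sdiff, Finset.mem_coe, ← natSupNorm_le_iff]
    omega
  refine (Set.encard_le_encard hsub).trans ?_
  rw [Set.encard_coe_eq_coe_finsetCard, Nat.cast_le,
    Finset.card_sdiff_of_subset (fun x => by simp only [box, ← natSupNorm_le_iff]; omega)]
  obtain ⟨j, rfl⟩ : ∃ j, k = j + 1 := ⟨k - 1, by omega⟩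
  have hcard (m : ℕ) : (Finset.Icc (-m : ℤ) m).card = 2 * m + 1 := by
    rw [Int.card_Icc]; omega
  simp only [box, Fintype.card_piFinset, hcard, Finset.prod_const, Finset.card_univ,
    Fintype.card_fin, add_tsub_cancel_right]
  calc (2 * (j + 1) + 1) ^ d - (2 * j + 1) ^ d ≤ 2 * d * (2 * j + 3) ^ (d - 1) := by
        grind [abs_pow_sub_pow_le (α := ℤ) (2 * j + 3) (2 * j + 1) d]
    _ ≤ 2 * d * (3 * (j + 1)) ^ (d - 1) := by gcongr; omega

theorem tsum_comp_natSupNorm_le (g : ℕ → ℝ≥0∞) (hg : g 0 = 0) :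
    ∑' x : Fin d → ℤ, g (natSupNorm x)
      ≤ ∑' k : ℕ, ((2 * d * (3 * k) ^ (d - 1) : ℕ) : ℝ≥0∞) * g k := by
  rw [← ENNReal.tsum_fiberwise _ natSupNorm]
  refine ENNReal.tsum_le_tsum fun k => ?_
  rw [tsum_congr fun x : natSupNorm ⁻¹' {k} => congrArg g x.2, ENNReal.tsum_const]
  rcases Nat.eq_zero_or_pos k with rfl | hk
  · simp [hg]
  · gcongr
    exact_mod_cast encard_natSupNorm_preimage_le hk

theorem pow_pred_mul_rpow_neg (hd : 1 ≤ d) {k : ℝ} (hk : 0 < k) (s : ℝ) :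
    k ^ (d - 1) * k ^ (-s) = k ^ (-1 - (s - d)) := by
  rw [← Real.rpow_natCast, ← Real.rpow_add hk, Nat.cast_sub hd]
  ring_nf

theorem tsum_rpow_neg_of_lt_natSupNorm_le (hd : 1 ≤ d) {s : ℝ} (hs : d < s) {K : ℕ} (hK : 1 ≤ K) :
    ∑' x : Fin d → ℤ, (if K < natSupNorm x then ENNReal.ofReal (‖x‖ ^ (-s)) else 0)
      ≤ ENNReal.ofReal (2 * d * 3 ^ (d - 1)) * ENNReal.ofReal ((K : ℝ) ^ (-(s - d)) / (s - d)) := by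
  simp_rw [norm_eq_natSupNorm]
  refine (tsum_comp_natSupNorm_le (fun k => if K < k then ENNReal.ofReal ((k : ℝ) ^ (-s)) else 0)
    (by simp)).trans ?_
  calc _ = ∑' k : ℕ, ENNReal.ofReal (2 * d * 3 ^ (d - 1)) *
        (if K < k then ENNReal.ofReal ((k : ℝ) ^ (-1 - (s - d))) else 0) := by
        refine tsum_congr fun k => ?_
        split_ifs with hk
        · have hk₀ : (0 : ℝ) < k := by exact_mod_cast (show 0 < k by omega)
          rw [← pow_pred_mul_rpow_neg hd hk₀, ← ENNReal.ofReal_natCast, ← ENNReal.ofReal_mul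
            (by positivity), ← ENNReal.ofReal_mul (by positivity)]
          congr 1
          push_cast
          ring
        · simp
    _ ≤ _ := by
        rw [ENNReal.tsum_mul_left]
        gcongr
        exact tsum_rpow_neg_one_sub_of_lt_le (by linarith) hK

theorem tsum_norm_mul_rpow_neg_of_natSupNorm_le_le (hd : 1 ≤ d) {s : ℝ} (hs₁ : d < s)
    (hs₂ : s < d + 1) (K : ℕ) :
    ∑' x : Fin d → ℤ, (if natSupNorm x ≤ K then ENNReal.ofReal (‖x‖ * ‖x‖ ^ (-s)) else 0)
      ≤ ENNReal.ofReal (2 * d * 3 ^ (d - 1)) *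
        ENNReal.ofReal ((K : ℝ) ^ (1 - (s - d)) / (1 - (s - d))) := by
  simp_rw [norm_eq_natSupNorm]
  refine (tsum_comp_natSupNorm_le
    (fun k => if k ≤ K then ENNReal.ofReal (k * (k : ℝ) ^ (-s)) else 0) (by simp)).trans ?_
  calc _ = ∑ k ∈ Finset.range (K + 1), ENNReal.ofReal (2 * d * 3 ^ (d - 1)) *
        ENNReal.ofReal ((k : ℝ) ^ (-(s - d))) := by
        rw [tsum_eq_sum (s := Finset.range (K + 1)) fun k hk => by
          rw [if_neg (by simpa [Nat.lt_succ_iff] using hk), mul_zero]]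
        refine Finset.sum_congr rfl fun k hk => ?_
        rw [if_pos (by simpa [Nat.lt_succ_iff] using hk)]
        rcases Nat.eq_zero_or_pos k with rfl | hk₀
        · rw [Nat.cast_zero, Real.zero_rpow (by linarith : -(s - d) ≠ 0)]
          simp
        · have hk₀ : (0 : ℝ) < k := by exact_mod_cast hk₀
          rw [← ENNReal.ofReal_natCast, ← ENNReal.ofReal_mul (by positivity),
            ← ENNReal.ofReal_mul (by positivity)]
          congr 1
          have := pow_pred_mul_rpow_neg hd hk₀ s
          rw [show -(s - d) = 1 + (-1 - (s - d)) by ring, Real.rpow_add hk₀, Real.rpow_one, ← this]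
          push_cast
          ring
    _ ≤ _ := by
        rw [← Finset.mul_sum, ← ENNReal.ofReal_sum_of_nonneg fun k _ => by positivity]
        gcongr
        exact sum_range_rpow_neg_le (by linarith) (by linarith) K

end Lattice

theorem measure_lt_sum_tsum_le {Ω ι κ : Type*} [MeasurableSpace Ω] [Countable κ] (P : Measure Ω)
    (X : ι → κ → Ω → ℝ≥0∞) (hX : ∀ i k, Measurable (X i k)) (I : Finset ι) (S : Set κ)
    {t : ℝ≥0∞} (ht₀ : t ≠ 0) (ht : t ≠ ∞) :
    P {ω | t < ∑ i ∈ I, ∑' k, X i k ω} ≤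
      ∑ i ∈ I, ∑' k : S, P {ω | X i k ω ≠ 0} + (∑ i ∈ I, ∑' k : ↥Sᶜ, ∫⁻ ω, X i k ω ∂P) / t := by
  set small : Ω → ℝ≥0∞ := fun ω => ∑ i ∈ I, ∑' k : ↥Sᶜ, X i k ω
  have hsub : {ω | t < ∑ i ∈ I, ∑' k, X i k ω} ⊆
      (⋃ i ∈ I, ⋃ k : S, {ω | X i k ω ≠ 0}) ∪ {ω | t ≤ small ω} := by
    intro ω hω
    by_cases hbig : ω ∈ ⋃ i ∈ I, ⋃ k : S, {ω | X i k ω ≠ 0}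
    · exact Or.inl hbig
    simp only [Set.mem_iUnion, Set.mem_ofPred_eq, not_exists, not_not] at hbig
    refine Or.inr (show t ≤ small ω from (hω.trans_eq (Finset.sum_congr rfl fun i hi => ?_)).le)
    rw [tsum_subtype Sᶜ fun k => X i k ω]
    refine tsum_congr fun k => ?_
    by_cases hk : k ∈ S
    · simp [hk, hbig i hi ⟨k, hk⟩]
    · simp [hk]
  have hsmall : Measurable small :=
    Finset.measurable_sum _ fun i _ => Measurable.tsum fun k => hX i k
  calc _ ≤ _ := measure_mono hsub
    _ ≤ _ := measure_union_le _ _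
    _ ≤ _ := by
      gcongr
      · exact (measure_biUnion_finset_le I _).trans
          (Finset.sum_le_sum fun i _ => measure_iUnion_le _)
      · refine (meas_ge_le_lintegral_div hsmall.aemeasurable ht₀ ht).trans_eq ?_
        change (∫⁻ ω, ∑ i ∈ I, ∑' k : ↥Sᶜ, X i k ω ∂P) / t = _
        rw [lintegral_finsetSum _ fun i _ => Measurable.tsum fun k : ↥Sᶜ => hX i k]
        simp_rw [lintegral_tsum fun k : ↥Sᶜ => (hX _ k).aemeasurable]

section JumpArray

variable {Ω : Type*} [MeasurableSpace Ω] {P : Measure Ω} {d : ℕ} {s C : ℝ}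
  {w : ℕ → (Fin d → ℤ) → Ω → ℕ}

theorem lintegral_natCast_eq_measure_eq_one {f : Ω → ℕ} (hf : Measurable f) (h₁ : ∀ ω, f ω ≤ 1) :
    ∫⁻ ω, (f ω : ℝ≥0∞) ∂P = P {ω | f ω = 1} := by
  have hind : (fun ω => (f ω : ℝ≥0∞)) = {ω | f ω = 1}.indicator 1 := funext fun ω => by
    rcases (h₁ ω).lt_or_eq with h | h
    · simp [show f ω = 0 by omega]
    · simp [h]
  rw [hind, lintegral_indicator_one (s := {ω | f ω = 1}) (hf (measurableSet_singleton 1))]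

variable (hval : ∀ i x ω, w i x ω ≤ 1)
  (hlaw : ∀ i x, x ≠ 0 → P {ω | w i x ω = 1} ≤ ENNReal.ofReal (C * ‖x‖ ^ (-s)))
include hval hlaw

theorem measure_jump_ne_zero_le (i : ℕ) (x : Fin d → ℤ) :
    P {ω | (‖x‖₊ : ℝ≥0∞) * w i x ω ≠ 0} ≤ ENNReal.ofReal (C * ‖x‖ ^ (-s)) := by
  rcases eq_or_ne x 0 with rfl | hx
  · simp
  refine (measure_mono fun ω hω => ?_).trans (hlaw i x hx)
  have := hval i x ω
  simp only [Set.mem_ofPred_eq, ne_eq, mul_eq_zero, Nat.cast_eq_zero, not_or] at hω ⊢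
  omega

theorem lintegral_jump_le (hmeas : ∀ i x, Measurable (w i x)) (i : ℕ) (x : Fin d → ℤ) :
    ∫⁻ ω, (‖x‖₊ : ℝ≥0∞) * w i x ω ∂P ≤ ENNReal.ofReal (‖x‖ * (C * ‖x‖ ^ (-s))) := by
  rcases eq_or_ne x 0 with rfl | hx
  · simp
  rw [lintegral_const_mul _ (by fun_prop : Measurable fun ω => (w i x ω : ℝ≥0∞)),
    lintegral_natCast_eq_measure_eq_one (hmeas i x) (hval i x), ENNReal.ofReal_mul (norm_nonneg x),
    ofReal_norm, enorm_eq_nnnorm]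
  gcongr
  exact hlaw i x hx

theorem tsum_measure_jump_ne_zero_le (hd : 1 ≤ d) (hs : (d : ℝ) < s) (hC : 0 ≤ C) (i : ℕ)
    {K : ℕ} (hK : 1 ≤ K) :
    ∑' x : {x : Fin d → ℤ | K < natSupNorm x}, P {ω | (‖(x : Fin d → ℤ)‖₊ : ℝ≥0∞) * w i x ω ≠ 0}
      ≤ ENNReal.ofReal (C * (2 * d * 3 ^ (d - 1) * ((K : ℝ) ^ (-(s - d)) / (s - d)))) := by
  rw [tsum_subtype {x | K < natSupNorm x} fun x => P {ω | (‖x‖₊ : ℝ≥0∞) * w i x ω ≠ 0},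
    ENNReal.ofReal_mul hC, ENNReal.ofReal_mul (by positivity)]
  calc _ ≤ ∑' x : Fin d → ℤ, ENNReal.ofReal C *
        (if K < natSupNorm x then ENNReal.ofReal (‖x‖ ^ (-s)) else 0) := by
        refine ENNReal.tsum_le_tsum fun x => ?_
        simp only [Set.indicator_apply, Set.mem_ofPred_eq]
        split_ifs
        · rw [← ENNReal.ofReal_mul hC]
          exact measure_jump_ne_zero_le hval hlaw i x
        · simp
    _ ≤ _ := by
        rw [ENNReal.tsum_mul_left]
        gcongr
        exact tsum_rpow_neg_of_lt_natSupNorm_le hd hs hK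

theorem tsum_lintegral_jump_le (hd : 1 ≤ d) (hs₁ : (d : ℝ) < s) (hs₂ : s < d + 1) (hC : 0 ≤ C)
    (hmeas : ∀ i x, Measurable (w i x)) (i K : ℕ) :
    ∑' x : ↥{x : Fin d → ℤ | K < natSupNorm x}ᶜ, ∫⁻ ω, (‖(x : Fin d → ℤ)‖₊ : ℝ≥0∞) * w i x ω ∂P
      ≤ ENNReal.ofReal (C * (2 * d * 3 ^ (d - 1) * ((K : ℝ) ^ (1 - (s - d)) / (1 - (s - d))))) := by
  rw [tsum_subtype {x | K < natSupNorm x}ᶜ fun x => ∫⁻ ω, (‖x‖₊ : ℝ≥0∞) * w i x ω ∂P,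
    ENNReal.ofReal_mul hC, ENNReal.ofReal_mul (by positivity)]
  calc _ ≤ ∑' x : Fin d → ℤ, ENNReal.ofReal C *
        (if natSupNorm x ≤ K then ENNReal.ofReal (‖x‖ * ‖x‖ ^ (-s)) else 0) := by
        refine ENNReal.tsum_le_tsum fun x => ?_
        simp only [Set.indicator_apply, Set.mem_compl_iff, Set.mem_ofPred_eq, not_lt]
        split_ifs
        · rw [← ENNReal.ofReal_mul hC, mul_left_comm]
          exact lintegral_jump_le hval hlaw hmeas i x
        · simp
    _ ≤ _ := by
        rw [ENNReal.tsum_mul_left]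
        gcongr
        exact tsum_norm_mul_rpow_neg_of_natSupNorm_le_le hd hs₁ hs₂ K

theorem measure_lt_jumpSum_le (hd : 1 ≤ d) (hs₁ : (d : ℝ) < s) (hs₂ : s < d + 1) {α : ℝ}
    (hα : α = s - d) (hC : 0 ≤ C) (hmeas : ∀ i x, Measurable (w i x)) (n : ℕ) {t : ℝ}
    (ht : 1 ≤ t) :
    P {ω | ENNReal.ofReal t < ∑ i ∈ Finset.range n, ∑' x : Fin d → ℤ, (‖x‖₊ : ℝ≥0∞) * w i x ω}
      ≤ ENNReal.ofReal (C * (2 * d * 3 ^ (d - 1)) * (1 / α + 2 / (1 - α)) * (n * t ^ (-α))) := by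
  subst hα
  set K := ⌈t⌉₊
  have hK : 1 ≤ K := Nat.one_le_ceil_iff.2 (by linarith)
  have hKt : (K : ℝ) ≤ 2 * t := by linarith [Nat.ceil_lt_add_one (by linarith : 0 ≤ t)]
  have hA : 0 ≤ C * (2 * d * 3 ^ (d - 1) * ((K : ℝ) ^ (-(s - d)) / (s - d))) :=
    mul_nonneg hC (mul_nonneg (by positivity) (div_nonneg (by positivity) (by linarith)))
  have hB : 0 ≤ C * (2 * d * 3 ^ (d - 1) * ((K : ℝ) ^ (1 - (s - d)) / (1 - (s - d)))) :=
    mul_nonneg hC (mul_nonneg (by positivity) (div_nonneg (by positivity) (by linarith)))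
  refine (measure_lt_sum_tsum_le P (fun i x ω => (‖x‖₊ : ℝ≥0∞) * w i x ω)
    (fun i x => by fun_prop) (Finset.range n) {x | K < natSupNorm x}
    (ENNReal.ofReal_pos.2 (by linarith)).ne' ENNReal.ofReal_ne_top).trans ?_
  grw [Finset.sum_le_sum fun i _ => tsum_measure_jump_ne_zero_le hval hlaw hd hs₁ hC i hK,
    Finset.sum_le_sum fun i _ => tsum_lintegral_jump_le hval hlaw hd hs₁ hs₂ hC hmeas i K]
  simp only [Finset.sum_const, Finset.card_range, nsmul_eq_mul]
  rw [← ENNReal.ofReal_natCast, ← ENNReal.ofReal_mul (by positivity),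
    ← ENNReal.ofReal_mul (by positivity), ← ENNReal.ofReal_div_of_pos (by linarith),
    ← ENNReal.ofReal_add (by positivity) (div_nonneg (by positivity) (by linarith))]
  refine ENNReal.ofReal_le_ofReal ?_
  have hsum := rpow_neg_div_add_rpow_one_sub_div_le (a := s - d) (by linarith) (by linarith)
    (by linarith) (Nat.le_ceil t) hKt
  calc _ = n * C * (2 * d * 3 ^ (d - 1)) *
        ((K : ℝ) ^ (-(s - d)) / (s - d) + (K : ℝ) ^ (1 - (s - d)) / (1 - (s - d)) / t) := by ring
    _ ≤ n * C * (2 * d * 3 ^ (d - 1)) * ((1 / (s - d) + 2 / (1 - (s - d))) * t ^ (-(s - d))) := by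
        gcongr
    _ = _ := by ring

end JumpArray

theorem stmt_6_general {Ω : Type*} [MeasurableSpace Ω] (P : Measure Ω) [IsProbabilityMeasure P]
    (d : ℕ) (hd : 1 ≤ d) (s : ℝ) (hs₁ : (d : ℝ) < s) (hs₂ : s < d + 1)
    (α : ℝ) (hα : α = s - d) (C : ℝ) (hC : 0 < C)
    (w : ℕ → (Fin d → ℤ) → Ω → ℕ) (hmeas : ∀ i x, Measurable (w i x))
    (hval : ∀ i x ω, w i x ω ≤ 1)
    (hlaw : ∀ i : ℕ, ∀ x : Fin d → ℤ, x ≠ 0 →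
      P {ω | w i x ω = 1} ≤ ENNReal.ofReal (C * ‖x‖ ^ (-s))) :
    ∃ c : ℝ, 0 < c ∧ ∃ N : ℕ, ∀ n : ℕ, N ≤ n → ∀ y : ℝ, 0 < y →
      P {ω | ENNReal.ofReal y <
          ENNReal.ofReal ((n : ℝ) ^ (-(1 : ℝ) / α)) *
            ∑ i ∈ Finset.range n, ∑' x : Fin d → ℤ, (‖x‖₊ : ENNReal) * (w i x ω : ENNReal)}
        ≤ ENNReal.ofReal (c * y ^ (-α)) := by
  have hα₀ : 0 < α := by linarith
  have hα₁ : α < 1 := by linarith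
  set c₀ : ℝ := C * (2 * d * 3 ^ (d - 1)) * (1 / α + 2 / (1 - α))
  have hc₀ : 0 ≤ c₀ := by
    have : 0 < 1 - α := by linarith
    positivity
  refine ⟨1 + c₀, by linarith, 1, fun n hn y hy => ?_⟩
  rcases le_or_gt y 1 with hy₁ | hy₁
  · refine prob_le_one.trans ?_
    rw [← ENNReal.ofReal_one]
    refine ENNReal.ofReal_le_ofReal (one_le_mul_of_one_le_of_one_le (by linarith) ?_)
    exact Real.one_le_rpow_of_pos_of_le_one_of_nonpos hy hy₁ (by linarith)
  have hn₀ : (0 : ℝ) < n := by exact_mod_cast hn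
  have hb : 1 ≤ (n : ℝ) ^ (1 / α) := Real.one_le_rpow (by exact_mod_cast hn) (by positivity)
  have hscale : n * (y * (n : ℝ) ^ (1 / α)) ^ (-α) = y ^ (-α) := by
    rw [Real.mul_rpow hy.le (by linarith), ← Real.rpow_mul hn₀.le,
      show 1 / α * -α = -1 by field_simp, Real.rpow_neg_one]
    field_simp
  simp_rw [neg_div, Real.rpow_neg hn₀.le,
    ofReal_lt_ofReal_inv_mul_iff hy.le (Real.rpow_pos_of_pos hn₀ (1 / α))]
  refine (measure_lt_jumpSum_le hval hlaw hd hs₁ hs₂ hα hC.le hmeas n (by nlinarith)).trans ?_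
  rw [hscale]
  gcongr
  linarith

/-- With α = s − d ∈ (0,1) and independent Bernoulli variables
w_i(x) with P(w_i(x)=1) ≤ C‖x‖^{-s}, the total jump size satisfies the stable tail
bound P(n^{-1/α} ∑_{i<n} ∑_x ‖x‖ w_i(x) > y) ≤ c y^{-α}. -/
theorem stmt_6 {Ω : Type*} [MeasurableSpace Ω] (P : Measure Ω) [IsProbabilityMeasure P]
    (d : ℕ) (hd : 1 ≤ d) (s : ℝ) (hs₁ : (d : ℝ) < s) (hs₂ : s < d + 1)
    (α : ℝ) (hα : α = s - d) (C : ℝ) (hC : 0 < C)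
    (w : ℕ → (Fin d → ℤ) → Ω → ℕ) (hmeas : ∀ i x, Measurable (w i x))
    (hval : ∀ i x ω, w i x ω ≤ 1)
    (hindep : iIndepFun
      (fun q : ℕ × (Fin d → ℤ) => w q.1 q.2) P)
    (hlaw : ∀ i : ℕ, ∀ x : Fin d → ℤ, x ≠ 0 →
      P {ω | w i x ω = 1} ≤ ENNReal.ofReal (C * ‖x‖ ^ (-s))) :
    ∃ c : ℝ, 0 < c ∧ ∃ N : ℕ, ∀ n : ℕ, N ≤ n → ∀ y : ℝ, 0 < y →
      P {ω | ENNReal.ofReal y <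
          ENNReal.ofReal ((n : ℝ) ^ (-(1 : ℝ) / α)) *
            ∑ i ∈ Finset.range n, ∑' x : Fin d → ℤ, (‖x‖₊ : ENNReal) * (w i x ω : ENNReal)}
        ≤ ENNReal.ofReal (c * y ^ (-α)) :=
  stmt_6_general P d hd s hs₁ hs₂ α hα C hC w hmeas hval hlaw
end

section
/- Let (X, 𝒳, λ, T) be an ergodic measure-preserving system and F ∈ L¹(λ) with F ≥ 0. Suppose (a_t)_{t≥1} is a sequence of measurable functions with 0 ≤ a_t ≤ (1/t)∑_{i=1}^{t} F∘T^i pointwise, such that for each fixed q, a_{bq+r} ≤ r/(bq+r) + (q/(bq+r)) ∑_{i=0}^{b-1} (1/q)(∑_{j=1}^{q} F∘T^{qi+j}) for all b ≥ 1 and 0 ≤ r < q. If additionally T^q is ergodic for every q ≥ 1 and (1/q)E_λ[∑_{j=1}^q F∘T^j] → L as q → ∞ and liminf_t a_t ≥ L a.s., then a_t → L λ-a.s. -/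
/-!
Cut time into blocks of length `q`. By the block bound, `a t ≤ q / t + (q / t) S_b`, where
`b = ⌊t / q⌋` and `S_b` is the `b`-th Birkhoff sum of `T^q` for the block average
`g_q = (1/q) ∑_{j=1}^q F ∘ T^j`. As `T^q` is ergodic, a.s. `S_b < c b` eventually for every
`c > ∫ g_q`, and `∫ g_q → L`; hence `limsup a_t ≤ L` a.s., and the hypothesis on `liminf a_t`
closes the sandwich.

Only the upper half of Birkhoff's theorem enters: if `∫ φ < 0`, the set where the Birkhoff sums
of `φ` are unbounded above is invariant, so by ergodicity it is null or conull, and Hopf's maximal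
inequality rules out the second case.
-/

open MeasureTheory Filter Finset

section BirkhoffSum

variable {X : Type*} {f : X → X} {φ : X → ℝ}

theorem birkhoffSum_sub_const (f : X → X) (φ : X → ℝ) (c : ℝ) (n : ℕ) (x : X) :
    birkhoffSum f (fun y => φ y - c) n x = birkhoffSum f φ n x - n * c := by
  simp [birkhoffSum, sum_sub_distrib]

theorem bddAbove_range_birkhoffSum_apply_iff (f : X → X) (φ : X → ℝ) (x : X) :
    BddAbove (Set.range fun n => birkhoffSum f φ n (f x)) ↔
      BddAbove (Set.range fun n => birkhoffSum f φ n x) := by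
  simp only [bddAbove_def, Set.forall_mem_range]
  constructor
  · rintro ⟨K, hK⟩
    refine ⟨max 0 (φ x + K), fun n => ?_⟩
    cases n with
    | zero => simp [birkhoffSum_zero]
    | succ n => exact birkhoffSum_succ' f φ n x ▸ le_max_of_le_right (by linarith [hK n])
  · rintro ⟨K, hK⟩
    refine ⟨K - φ x, fun n => ?_⟩
    linarith [birkhoffSum_succ' f φ n x ▸ hK (n + 1)]

noncomputable def maxBirkhoffSum (f : X → X) (φ : X → ℝ) : ℕ → X → ℝ
  | 0 => fun _ => 0
  | n + 1 => fun x => max (maxBirkhoffSum f φ n x) (birkhoffSum f φ (n + 1) x)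

theorem maxBirkhoffSum_succ (f : X → X) (φ : X → ℝ) (n : ℕ) (x : X) :
    maxBirkhoffSum f φ (n + 1) x = max (maxBirkhoffSum f φ n x) (birkhoffSum f φ (n + 1) x) :=
  rfl

theorem maxBirkhoffSum_nonneg (f : X → X) (φ : X → ℝ) (n : ℕ) (x : X) :
    0 ≤ maxBirkhoffSum f φ n x := by
  induction n with
  | zero => exact le_rfl
  | succ n ih => exact ih.trans (le_max_left _ _)

theorem monotone_maxBirkhoffSum (f : X → X) (φ : X → ℝ) (x : X) :
    Monotone fun n => maxBirkhoffSum f φ n x :=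
  monotone_nat_of_le_succ fun _ => le_max_left _ _

theorem birkhoffSum_le_maxBirkhoffSum (f : X → X) (φ : X → ℝ) {k n : ℕ} (hkn : k ≤ n) (x : X) :
    birkhoffSum f φ k x ≤ maxBirkhoffSum f φ n x := by
  induction n with
  | zero => simp [Nat.le_zero.mp hkn, maxBirkhoffSum]
  | succ n ih =>
    rcases hkn.eq_or_lt with rfl | hkn
    · exact le_max_right _ _
    · exact (ih (Nat.lt_succ_iff.mp hkn)).trans (monotone_maxBirkhoffSum f φ x n.le_succ)

theorem exists_maxBirkhoffSum_eq_birkhoffSum_succ {n : ℕ} {x : X}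
    (hpos : 0 < maxBirkhoffSum f φ n x) :
    ∃ k < n, maxBirkhoffSum f φ n x = birkhoffSum f φ (k + 1) x := by
  induction n with
  | zero => exact absurd hpos (lt_irrefl 0)
  | succ n ih =>
    rcases le_total (birkhoffSum f φ (n + 1) x) (maxBirkhoffSum f φ n x) with hle | hle
    · rw [maxBirkhoffSum_succ, max_eq_left hle] at hpos ⊢
      obtain ⟨k, hk, heq⟩ := ih hpos
      exact ⟨k, hk.trans n.lt_succ_self, heq⟩
    · exact ⟨n, n.lt_succ_self, max_eq_right hle⟩

theorem maxBirkhoffSum_le_add_maxBirkhoffSum_apply {n : ℕ} {x : X}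
    (hpos : 0 < maxBirkhoffSum f φ n x) :
    maxBirkhoffSum f φ n x ≤ φ x + maxBirkhoffSum f φ n (f x) := by
  obtain ⟨k, hk, heq⟩ := exists_maxBirkhoffSum_eq_birkhoffSum_succ hpos
  rw [heq, birkhoffSum_succ']
  exact add_le_add_right (birkhoffSum_le_maxBirkhoffSum f φ hk.le (f x)) _

variable [MeasurableSpace X] {μ : Measure X}

theorem measurable_birkhoffSum (hf : Measurable f) (hφ : Measurable φ) (n : ℕ) :
    Measurable (birkhoffSum f φ n) :=
  Finset.measurable_sum _ fun k _ => hφ.comp (hf.iterate k)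

theorem measurable_maxBirkhoffSum (hf : Measurable f) (hφ : Measurable φ) (n : ℕ) :
    Measurable (maxBirkhoffSum f φ n) := by
  induction n with
  | zero => exact measurable_const
  | succ n ih => exact ih.max (measurable_birkhoffSum hf hφ (n + 1))

theorem integrable_birkhoffSum (hf : MeasurePreserving f μ μ) (hφ : Integrable φ μ) (n : ℕ) :
    Integrable (birkhoffSum f φ n) μ :=
  integrable_finsetSum _ fun k _ => (hf.iterate k).integrable_comp_of_integrable hφ

theorem integrable_maxBirkhoffSum (hf : MeasurePreserving f μ μ) (hφ : Integrable φ μ) (n : ℕ) :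
    Integrable (maxBirkhoffSum f φ n) μ := by
  induction n with
  | zero => exact integrable_zero _ _ _
  | succ n ih => exact ih.sup (integrable_birkhoffSum hf hφ (n + 1))

/-- Hopf's maximal ergodic inequality, by Garsia's argument: on `{Mₙ > 0}` one has
`φ ≥ Mₙ - Mₙ ∘ f`, and `Mₙ - Mₙ ∘ f` has integral `≤ 0` over that set because `Mₙ ≥ 0`
vanishes off it and `f` preserves `μ`. -/
theorem MeasureTheory.MeasurePreserving.setIntegral_maxBirkhoffSum_pos_nonneg
    (hf : MeasurePreserving f μ μ) (hφm : Measurable φ) (hφ : Integrable φ μ) (n : ℕ) :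
    0 ≤ ∫ x in {x | 0 < maxBirkhoffSum f φ n x}, φ x ∂μ := by
  set M := maxBirkhoffSum f φ n
  have hMm : Measurable M := measurable_maxBirkhoffSum hf.measurable hφm n
  have hM : Integrable M μ := integrable_maxBirkhoffSum hf hφ n
  have hMf : Integrable (fun x => M (f x)) μ := hf.integrable_comp_of_integrable hM
  have hE : MeasurableSet {x | 0 < M x} := measurableSet_lt measurable_const hMm
  have hM_set : ∫ x in {x | 0 < M x}, M x ∂μ = ∫ x, M x ∂μ :=
    setIntegral_eq_integral_of_forall_compl_eq_zero fun x hx =>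
      (not_lt.mp hx).antisymm (maxBirkhoffSum_nonneg f φ n x)
  have hMf_set : ∫ x in {x | 0 < M x}, M (f x) ∂μ ≤ ∫ x, M (f x) ∂μ :=
    setIntegral_le_integral hMf (Eventually.of_forall fun x => maxBirkhoffSum_nonneg f φ n (f x))
  have hMf_eq : ∫ x, M (f x) ∂μ = ∫ x, M x ∂μ := by
    rw [← integral_map hf.aemeasurable hMm.aestronglyMeasurable, hf.map_eq]
  calc 0 = ∫ x, M x ∂μ - ∫ x, M (f x) ∂μ := by rw [hMf_eq, sub_self]
    _ ≤ ∫ x in {x | 0 < M x}, (M x - M (f x)) ∂μ := by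
      rw [integral_sub hM.integrableOn hMf.integrableOn, hM_set]
      exact sub_le_sub_left hMf_set _
    _ ≤ ∫ x in {x | 0 < M x}, φ x ∂μ :=
      setIntegral_mono_on (hM.sub hMf).integrableOn hφ.integrableOn hE fun x hx => by
        linarith [maxBirkhoffSum_le_add_maxBirkhoffSum_apply (f := f) hx]

theorem MeasureTheory.MeasurePreserving.integral_nonneg_of_ae_exists_birkhoffSum_pos
    (hf : MeasurePreserving f μ μ) (hφm : Measurable φ) (hφ : Integrable φ μ)
    (hpos : ∀ᵐ x ∂μ, ∃ n, 0 < birkhoffSum f φ n x) : 0 ≤ ∫ x, φ x ∂μ := by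
  set E : ℕ → Set X := fun n => {x | 0 < maxBirkhoffSum f φ n x}
  have hEm : ∀ n, MeasurableSet (E n) := fun n =>
    measurableSet_lt measurable_const (measurable_maxBirkhoffSum hf.measurable hφm n)
  have hEmono : Monotone E := fun m n hmn x hx =>
    hx.trans_le (monotone_maxBirkhoffSum f φ x hmn)
  have hEfull : ∀ᵐ x ∂μ, x ∈ ⋃ n, E n := hpos.mono fun x ⟨n, hn⟩ =>
    Set.mem_iUnion.mpr ⟨n, hn.trans_le (birkhoffSum_le_maxBirkhoffSum f φ le_rfl x)⟩
  rw [← setIntegral_univ, ← setIntegral_congr_set (eventuallyEq_univ.mpr hEfull)]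
  exact ge_of_tendsto' (tendsto_setIntegral_of_monotone hEm hEmono hφ.integrableOn) fun n =>
    hf.setIntegral_maxBirkhoffSum_pos_nonneg hφm hφ n

theorem Ergodic.ae_bddAbove_birkhoffSum (hf : Ergodic f μ) (hφm : Measurable φ)
    (hφ : Integrable φ μ) (hneg : ∫ x, φ x ∂μ < 0) :
    ∀ᵐ x ∂μ, BddAbove (Set.range fun n => birkhoffSum f φ n x) := by
  have hinv : f ⁻¹' {x | BddAbove (Set.range fun n => birkhoffSum f φ n x)} =
      {x | BddAbove (Set.range fun n => birkhoffSum f φ n x)} :=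
    Set.ext fun x => bddAbove_range_birkhoffSum_apply_iff f φ x
  have hmeas := measurableSet_bddAbove_range fun n =>
    measurable_birkhoffSum hf.toMeasurePreserving.measurable hφm n
  refine (hf.ae_mem_or_ae_notMem hmeas hinv).resolve_right fun hunbdd => hneg.not_ge ?_
  refine hf.toMeasurePreserving.integral_nonneg_of_ae_exists_birkhoffSum_pos hφm hφ ?_
  filter_upwards [hunbdd] with x hx
  by_contra! hle
  exact hx ⟨0, Set.forall_mem_range.mpr hle⟩

theorem Ergodic.ae_eventually_birkhoffSum_lt [IsProbabilityMeasure μ] (hf : Ergodic f μ)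
    (hφ : Integrable φ μ) {c : ℝ} (hc : ∫ x, φ x ∂μ < c) :
    ∀ᵐ x ∂μ, ∀ᶠ n : ℕ in atTop, birkhoffSum f φ n x < c * n := by
  obtain ⟨c', hφc', hc'c⟩ := exists_between hc
  set ψ := hφ.1.mk φ
  have hψm : Measurable ψ := hφ.1.stronglyMeasurable_mk.measurable
  have hφψ : φ =ᵐ[μ] ψ := hφ.1.ae_eq_mk
  have hψ : Integrable ψ μ := hφ.congr hφψ
  have hneg : ∫ x, (ψ x - c') ∂μ < 0 := by
    rw [integral_sub hψ (integrable_const c'), ← integral_congr_ae hφψ]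
    simp only [integral_const, probReal_univ, smul_eq_mul, one_mul]
    linarith
  have hsums : ∀ᵐ x ∂μ, ∀ n, birkhoffSum f φ n x = birkhoffSum f ψ n x :=
    ae_all_iff.mpr fun n => Measure.QuasiMeasurePreserving.birkhoffSum_ae_eq_of_ae_eq
      hf.toMeasurePreserving.quasiMeasurePreserving hφψ n
  filter_upwards [hf.ae_bddAbove_birkhoffSum (φ := fun x => ψ x - c') (hψm.sub measurable_const)
    (hψ.sub (integrable_const c')) hneg, hsums] with x ⟨K, hK⟩ hx
  have hgap : Tendsto (fun n : ℕ => (c - c') * n) atTop atTop :=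
    tendsto_natCast_atTop_atTop.const_mul_atTop (by linarith)
  filter_upwards [hgap.eventually_gt_atTop K] with n hn
  have hKn : birkhoffSum f (fun y => ψ y - c') n x ≤ K := hK ⟨n, rfl⟩
  rw [birkhoffSum_sub_const] at hKn
  rw [hx n]
  linarith

end BirkhoffSum

theorem eventually_lt_add_of_block_bound {a s : ℕ → ℝ} {q : ℕ} (hq : 1 ≤ q) {c ε : ℝ}
    (hc : 0 ≤ c) (hε : 0 < ε)
    (hblock : ∀ b : ℕ, 1 ≤ b → ∀ r : ℕ, r < q →
      a (b * q + r) ≤ (r : ℝ) / (b * q + r) + ((q : ℝ) / (b * q + r)) * s b)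
    (hs : ∀ᶠ b : ℕ in atTop, s b ≤ c * b) :
    ∀ᶠ t : ℕ in atTop, a t < c + ε := by
  obtain ⟨B, hB⟩ := eventually_atTop.mp hs
  have hsmall : ∀ᶠ t : ℕ in atTop, (q : ℝ) / t < ε :=
    (tendsto_const_div_atTop_nhds_zero_nat (q : ℝ)).eventually (gt_mem_nhds hε)
  filter_upwards [eventually_ge_atTop (max B 1 * q), hsmall] with t ht hqt
  set b := t / q
  set r := t % q
  have hb : max B 1 ≤ b := (Nat.le_div_iff_mul_le hq).mpr ht
  have hr : r < q := Nat.mod_lt t hq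
  have hbqr : ((b * q + r : ℕ) : ℝ) = t := by rw [Nat.div_add_mod' t q]
  push_cast at hbqr
  have hbq : (b : ℝ) * q ≤ t := by rw [← hbqr]; exact le_add_of_nonneg_right r.cast_nonneg
  have htpos : (0 : ℝ) < t :=
    Nat.cast_pos.mpr ((Nat.mul_pos (one_pos.trans_le (le_max_right B 1)) hq).trans_le ht)
  have hat := Nat.div_add_mod' t q ▸ hblock b (le_of_max_le_right hb) r hr
  rw [hbqr] at hat
  calc a t ≤ r / t + q / t * s b := hat
    _ ≤ q / t + q / t * (c * b) := by
      have hrq : (r : ℝ) ≤ q := by exact_mod_cast hr.le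
      gcongr
      exact hB b (le_of_max_le_left hb)
    _ = q / t + c * (b * q / t) := by ring
    _ ≤ q / t + c * 1 := by gcongr; exact (div_le_one htpos).mpr hbq
    _ < c + ε := by linarith

theorem tendsto_of_le_liminf_of_forall_eventually_lt {ι : Type*} {l : Filter ι} {u : ι → ℝ}
    {L : ℝ} (hbdd : IsBoundedUnder (· ≥ ·) l u) (hinf : L ≤ liminf u l)
    (hsup : ∀ n : ℕ, ∀ᶠ i in l, u i < L + 1 / (n + 1)) :
    Tendsto u l (nhds L) := by
  refine tendsto_order.2 ⟨fun L' hL' => eventually_lt_of_lt_liminf (hL'.trans_le hinf) hbdd,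
    fun L' hL' => ?_⟩
  obtain ⟨n, hn⟩ := exists_nat_one_div_lt (sub_pos.2 hL')
  exact (hsup n).mono fun i hi => hi.trans (by linarith)

theorem birkhoffSum_iterate_eq_sum_blocks {X : Type*} (T : X → X) (F : X → ℝ) (q b : ℕ) (x : X) :
    birkhoffSum T^[q] (fun y => (1 / (q : ℝ)) * ∑ j ∈ Icc 1 q, F (T^[j] y)) b x =
      ∑ i ∈ range b, (1 / (q : ℝ)) * ∑ j ∈ Icc 1 q, F (T^[q * i + j] x) := by
  refine sum_congr rfl fun i _ => ?_
  simp only [add_comm (q * i), Function.iterate_add_apply, Function.iterate_mul]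

theorem ae_eventually_lt_add_of_block_bound {X : Type*} [MeasurableSpace X] {μ : Measure X}
    [IsProbabilityMeasure μ] {T : X → X} (hT : MeasurePreserving T μ μ) {F : X → ℝ}
    (hF : Integrable F μ) {a : ℕ → X → ℝ} {q : ℕ} (hq : 1 ≤ q) (hTq : Ergodic T^[q] μ)
    (hblock : ∀ b : ℕ, 1 ≤ b → ∀ r : ℕ, r < q → ∀ x,
      a (b * q + r) x ≤ (r : ℝ) / (b * q + r) +
        ((q : ℝ) / (b * q + r)) *
          ∑ i ∈ range b, (1 / (q : ℝ)) * ∑ j ∈ Icc 1 q, F (T^[q * i + j] x))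
    {c ε : ℝ} (hc0 : 0 ≤ c) (hc : (1 / (q : ℝ)) * ∫ x, (∑ j ∈ Icc 1 q, F (T^[j] x)) ∂μ < c)
    (hε : 0 < ε) :
    ∀ᵐ x ∂μ, ∀ᶠ t : ℕ in atTop, a t x < c + ε := by
  have hblockAvg : Integrable (fun y => (1 / (q : ℝ)) * ∑ j ∈ Icc 1 q, F (T^[j] y)) μ :=
    (integrable_finsetSum _ fun j _ => (hT.iterate j).integrable_comp_of_integrable hF).const_mul _
  filter_upwards [hTq.ae_eventually_birkhoffSum_lt hblockAvg (by rwa [integral_const_mul])]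
    with x hx
  refine eventually_lt_add_of_block_bound hq hc0 hε (fun b hb r hr => ?_)
    (hx.mono fun _ => le_of_lt)
  exact (hblock b hb r hr x).trans_eq (by rw [birkhoffSum_iterate_eq_sum_blocks])

theorem stmt_11_general {X : Type*} [MeasurableSpace X] (μ : Measure X) [IsProbabilityMeasure μ]
    (T : X → X) (F : X → ℝ) (hF : Integrable F μ) (hFnn : ∀ x, 0 ≤ F x)
    (a : ℕ → X → ℝ)
    (hup : ∀ t : ℕ, 1 ≤ t → ∀ x, 0 ≤ a t x ∧
      a t x ≤ (1 / (t : ℝ)) * ∑ i ∈ Finset.Icc 1 t, F (T^[i] x))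
    (hblock : ∀ q : ℕ, 1 ≤ q → ∀ b : ℕ, 1 ≤ b → ∀ r : ℕ, r < q → ∀ x,
      a (b * q + r) x ≤ (r : ℝ) / (b * q + r) +
        ((q : ℝ) / (b * q + r)) *
          ∑ i ∈ Finset.range b, (1 / (q : ℝ)) * ∑ j ∈ Finset.Icc 1 q, F (T^[q * i + j] x))
    (herg : ∀ q : ℕ, 1 ≤ q → Ergodic (T^[q]) μ)
    (L : ℝ)
    (hmean : Tendsto (fun q : ℕ =>
        (1 / (q : ℝ)) * ∫ x, (∑ j ∈ Finset.Icc 1 q, F (T^[j] x)) ∂μ) atTop (nhds L))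
    (hliminf : ∀ᵐ x ∂μ, L ≤ liminf (fun t : ℕ => a t x) atTop) :
    ∀ᵐ x ∂μ, Tendsto (fun t : ℕ => a t x) atTop (nhds L) := by
  have hT : MeasurePreserving T μ μ := by simpa using (herg 1 le_rfl).toMeasurePreserving
  have hL : 0 ≤ L := ge_of_tendsto' hmean fun q =>
    mul_nonneg (by positivity) (integral_nonneg fun x => sum_nonneg fun j _ => hFnn _)
  have hupper : ∀ n : ℕ, ∀ᵐ x ∂μ, ∀ᶠ t in atTop, a t x < L + 1 / (n + 1) := by
    intro n
    have hε : (0 : ℝ) < 1 / (n + 1) := by positivity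
    obtain ⟨q, hq, hmean_q⟩ := ((eventually_ge_atTop 1).and
      (hmean.eventually (gt_mem_nhds (lt_add_of_pos_right L (half_pos hε))))).exists
    filter_upwards [ae_eventually_lt_add_of_block_bound hT hF hq (herg q hq) (hblock q hq)
      (by positivity) hmean_q (half_pos hε)] with x hx
    simpa only [add_assoc, add_halves] using hx
  filter_upwards [ae_all_iff.mpr hupper, hliminf] with x hx hxL
  refine tendsto_of_le_liminf_of_forall_eventually_lt ?_ hxL hx
  exact isBoundedUnder_of_eventually_ge ((eventually_ge_atTop 1).mono fun t ht => (hup t ht x).1)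

/-- The sandwiching/bracketing argument: if 0 ≤ a_t ≤ Birkhoff averages of
F, the block upper bound holds, T^q is ergodic for every q, the block means converge to
L, and liminf a_t ≥ L a.s., then a_t → L a.s. -/
theorem stmt_11 {X : Type*} [MeasurableSpace X] (μ : Measure X) [IsProbabilityMeasure μ]
    (T : X → X) (F : X → ℝ) (hF : Integrable F μ) (hFnn : ∀ x, 0 ≤ F x)
    (a : ℕ → X → ℝ) (ha : ∀ t, Measurable (a t))
    (hup : ∀ t : ℕ, 1 ≤ t → ∀ x, 0 ≤ a t x ∧
      a t x ≤ (1 / (t : ℝ)) * ∑ i ∈ Finset.Icc 1 t, F (T^[i] x))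
    (hblock : ∀ q : ℕ, 1 ≤ q → ∀ b : ℕ, 1 ≤ b → ∀ r : ℕ, r < q → ∀ x,
      a (b * q + r) x ≤ (r : ℝ) / (b * q + r) +
        ((q : ℝ) / (b * q + r)) *
          ∑ i ∈ Finset.range b, (1 / (q : ℝ)) * ∑ j ∈ Finset.Icc 1 q, F (T^[q * i + j] x))
    (herg : ∀ q : ℕ, 1 ≤ q → Ergodic (T^[q]) μ)
    (L : ℝ)
    (hmean : Tendsto (fun q : ℕ =>
        (1 / (q : ℝ)) * ∫ x, (∑ j ∈ Finset.Icc 1 q, F (T^[j] x)) ∂μ) atTop (nhds L))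
    (hliminf : ∀ᵐ x ∂μ, L ≤ liminf (fun t : ℕ => a t x) atTop) :
    ∀ᵐ x ∂μ, Tendsto (fun t : ℕ => a t x) atTop (nhds L) :=
  stmt_11_general μ T F hF hFnn a hup hblock herg L hmean hliminf
end
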